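/- arXiv:1309.5314 — 2 statements merged into one kernel-verified Lean document; each statement's English description precedes it below -/
import Mathlib

section
/- For all integers r, s ∈ ℤ and every integer m ≥ 1, one has (r,m) ∼_H (s,m) if and only if there exists a natural number k with 0 ≤ k < m such that 2^m − 1 divides r·2^k − s. -/
/-!
Conjugating `(r, m)` by `(c, n)` gives `(2ⁿ r + (1 - 2ᵐ) c, m)`, so `(r, m) ∼ (s, m)` exactly
when `s - 2ⁿ r ∈ (2ᵐ - 1) ℤ[1/2]` for some `n`. Clearing denominators turns this into
`2ᵐ - 1 ∣ r 2ᴬ - s 2ᴮ` in `ℤ`, and since `2ᵐ ≡ 1` modulo `2ᵐ - 1`, multiplying by a suitable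
power of `2` reduces this to `2ᵐ - 1 ∣ r 2ᵏ - s` with `k < m`.
-/

/-- The ring of dyadic rationals `ℤ[1/2]`, as a subring of `ℚ`. -/
def DyadicQ : Subring ℚ := Subring.closure {(2:ℚ)⁻¹}

lemma DyadicQ.two_mem : (2:ℚ) ∈ DyadicQ := by
  have := add_mem (Subring.one_mem DyadicQ) (Subring.one_mem DyadicQ)
  rwa [one_add_one_eq_two] at this

lemma DyadicQ.half_mem : (2:ℚ)⁻¹ ∈ DyadicQ := Subring.subset_closure rfl

/-- `2` as a unit of `ℤ[1/2]`. -/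
def DyadicQ.two : DyadicQˣ where
  val := ⟨2, DyadicQ.two_mem⟩
  inv := ⟨(2:ℚ)⁻¹, DyadicQ.half_mem⟩
  val_inv := by ext; norm_num
  inv_val := by ext; norm_num

/-- The powers `2^m` for `m : ℤ`, as elements of `ℤ[1/2]`. -/
def pow2 (m : ℤ) : DyadicQ := ((DyadicQ.two ^ m : DyadicQˣ) : DyadicQ)

lemma pow2_add (m q : ℤ) : pow2 (m + q) = pow2 m * pow2 q := by
  simp [pow2, zpow_add]

lemma pow2_zero : pow2 0 = 1 := by simp [pow2]

/-- The group `H = ℤ[1/2] ⋊ ℤ`, where `ℤ` acts by powers of `2`;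
multiplication is `(r,m)·(s,q) = (r + 2^m·s, m+q)`. -/
@[ext] structure Hgrp where
  r : DyadicQ
  m : ℤ

instance : Mul Hgrp := ⟨fun x y => ⟨x.r + pow2 x.m * y.r, x.m + y.m⟩⟩
instance : One Hgrp := ⟨⟨0, 0⟩⟩
instance : Inv Hgrp := ⟨fun x => ⟨-(pow2 (-x.m) * x.r), -x.m⟩⟩

lemma Hgrp.mul_def (x y : Hgrp) : x * y = ⟨x.r + pow2 x.m * y.r, x.m + y.m⟩ := rfl
lemma Hgrp.one_def : (1 : Hgrp) = ⟨0, 0⟩ := rfl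
lemma Hgrp.inv_def (x : Hgrp) : x⁻¹ = ⟨-(pow2 (-x.m) * x.r), -x.m⟩ := rfl

instance : Group Hgrp where
  mul_assoc a b c := by
    simp only [Hgrp.mul_def, Hgrp.mk.injEq, pow2_add]
    constructor <;> ring
  one_mul a := by
    obtain ⟨r, m⟩ := a
    simp only [Hgrp.one_def, Hgrp.mul_def, Hgrp.mk.injEq, pow2_zero]
    constructor <;> ring
  mul_one a := by
    obtain ⟨r, m⟩ := a
    simp only [Hgrp.one_def, Hgrp.mul_def, Hgrp.mk.injEq, pow2_zero]
    constructor <;> ring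
  inv_mul_cancel a := by
    simp only [Hgrp.inv_def, Hgrp.mul_def, Hgrp.one_def, Hgrp.mk.injEq]
    constructor <;> ring

/-- Conjugacy in `H`. -/
def conjH (x y : Hgrp) : Prop := ∃ z : Hgrp, z * x * z⁻¹ = y

/-- The element `a = (1,0)` of `H`. -/
def aH : Hgrp := ⟨1, 0⟩
/-- The element `t = (0,1)` of `H`. -/
def tH : Hgrp := ⟨0, 1⟩
lemma aH_zpow (n : ℤ) : aH ^ n = Hgrp.mk (n : DyadicQ) 0 := by
  induction n using Int.induction_on with
  | zero => simp [Hgrp.one_def]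
  | succ k ih =>
      rw [zpow_add_one, ih]
      simp only [aH, Hgrp.mul_def, Hgrp.mk.injEq, pow2_zero]
      push_cast
      constructor <;> first | ring | simp
  | pred k ih =>
      rw [zpow_sub_one, ih]
      simp only [aH, Hgrp.inv_def, Hgrp.mul_def, Hgrp.mk.injEq, pow2_zero, neg_zero]
      push_cast
      constructor <;> first | ring | simp

lemma tH_zpow (n : ℤ) : tH ^ n = Hgrp.mk 0 n := by
  induction n using Int.induction_on with
  | zero => simp [Hgrp.one_def]
  | succ k ih =>
      rw [zpow_add_one, ih]
      simp [tH, Hgrp.mul_def]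
  | pred k ih =>
      rw [zpow_sub_one, ih]
      simp only [tH, Hgrp.inv_def, Hgrp.mul_def, Hgrp.mk.injEq]
      constructor <;> ring

lemma aH_zpow_injective : Function.Injective fun n : ℤ => aH ^ n := by
  intro x y h
  simp only [aH_zpow, Hgrp.mk.injEq] at h
  have : ((x : DyadicQ) : ℚ) = ((y : DyadicQ) : ℚ) := by rw [h.1]
  simpa using this

lemma tH_zpow_injective : Function.Injective fun n : ℤ => tH ^ n := by
  intro x y h
  simp only [tH_zpow, Hgrp.mk.injEq] at h
  exact h.2

/-- The homomorphism `ℤ →* G` given by powers of `g`. -/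
def zintHom {G : Type*} [Group G] (g : G) : Multiplicative ℤ →* G where
  toFun n := g ^ (Multiplicative.toAdd n)
  map_one' := by simp
  map_mul' x y := by simp [zpow_add]

/-- For `g` with `n ↦ g ^ n` injective, `⟨g⟩ ≅ ℤ`. -/
noncomputable def zpowMulEquiv {G : Type*} [Group G] (g : G)
    (hg : Function.Injective fun n : ℤ => g ^ n) :
    Multiplicative ℤ ≃* Subgroup.zpowers g := by
  refine MulEquiv.ofBijective
    ((zintHom g).codRestrict (Subgroup.zpowers g).toSubmonoid
      (fun n => Subgroup.mem_zpowers_iff.mpr ⟨Multiplicative.toAdd n, rfl⟩)) ⟨?_, ?_⟩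
  · intro x y h
    have : g ^ (Multiplicative.toAdd x) = g ^ (Multiplicative.toAdd y) :=
      congrArg Subtype.val h
    exact hg this
  · rintro ⟨x, hx⟩
    obtain ⟨n, hn⟩ := Subgroup.mem_zpowers_iff.mp hx
    exact ⟨Multiplicative.ofAdd n, Subtype.ext hn⟩

/-- The associated isomorphism `⟨a⟩ ≅ ⟨t⟩`, `a ↦ t`, of the HNN extension defining
the Baumslag group. -/
noncomputable def φBS : Subgroup.zpowers aH ≃* Subgroup.zpowers tH :=
  (zpowMulEquiv aH aH_zpow_injective).symm.trans (zpowMulEquiv tH tH_zpow_injective)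

/-- The Baumslag group `G(1,2)`, as HNN extension of `H = BS(1,2)` with stable letter `b`,
associated subgroups `⟨a⟩` and `⟨t⟩`, and associated isomorphism `a ↦ t`. -/
noncomputable abbrev BG := HNNExtension Hgrp (Subgroup.zpowers aH) (Subgroup.zpowers tH) φBS

/-- The embedding of `H` into the Baumslag group. -/
noncomputable def ι : Hgrp →* BG := HNNExtension.of

/-- The stable letter `b` of the Baumslag group. -/
noncomputable def bBG : BG := HNNExtension.t

/-- Conjugacy in the Baumslag group `G(1,2)`. -/
def conjBG (x y : BG) : Prop := ∃ z : BG, z * x * z⁻¹ = y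

lemma coe_pow2 (n : ℤ) : ((pow2 n : DyadicQ) : ℚ) = 2 ^ n := by
  have h : ((Units.map DyadicQ.subtype.toMonoidHom (DyadicQ.two ^ n) : ℚˣ) : ℚ) =
      pow2 n := rfl
  rw [← h, map_zpow, Units.val_zpow_eq_zpow_val]
  norm_num [DyadicQ.two]

lemma DyadicQ.exists_eq_intCast_div_two_pow (x : DyadicQ) :
    ∃ (a : ℤ) (j : ℕ), (x : ℚ) = a / 2 ^ j := by
  obtain ⟨x, hx⟩ := x
  induction hx using Subring.closure_induction with
  | mem y hy => exact ⟨1, 1, by simp [Set.mem_singleton_iff.mp hy]⟩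
  | one => exact ⟨1, 0, by norm_num⟩
  | zero => exact ⟨0, 0, by norm_num⟩
  | add y z _ _ ihy ihz =>
      obtain ⟨a, j, hy⟩ := ihy
      obtain ⟨b, i, hz⟩ := ihz
      refine ⟨a * 2 ^ i + b * 2 ^ j, j + i, ?_⟩
      simp only at hy hz ⊢
      rw [hy, hz]
      push_cast
      field_simp
      ring
  | neg y _ ihy =>
      obtain ⟨a, j, hy⟩ := ihy
      refine ⟨-a, j, ?_⟩
      simp only at hy ⊢
      rw [hy]
      push_cast
      ring
  | mul y z _ _ ihy ihz =>
      obtain ⟨a, j, hy⟩ := ihy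
      obtain ⟨b, i, hz⟩ := ihz
      refine ⟨a * b, j + i, ?_⟩
      simp only at hy hz ⊢
      rw [hy, hz]
      push_cast
      field_simp
      ring

lemma Hgrp.conj_mk (z : Hgrp) (r : DyadicQ) (m : ℤ) :
    z * ⟨r, m⟩ * z⁻¹ = ⟨pow2 z.m * r + (1 - pow2 m) * z.r, m⟩ := by
  have h : pow2 (z.m + m) * pow2 (-z.m) = pow2 m := by
    rw [← pow2_add]
    congr 1
    ring
  simp only [Hgrp.mul_def, Hgrp.inv_def, Hgrp.mk.injEq]
  constructor
  · linear_combination (-z.r) * h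
  · ring

lemma conjH_mk_iff (r s : DyadicQ) (m : ℤ) :
    conjH ⟨r, m⟩ ⟨s, m⟩ ↔ ∃ (n : ℤ) (c : DyadicQ), pow2 n * r + (1 - pow2 m) * c = s := by
  simp only [conjH, Hgrp.conj_mk, Hgrp.mk.injEq, and_true]
  exact ⟨fun ⟨⟨c, n⟩, h⟩ => ⟨n, c, h⟩, fun ⟨n, c, h⟩ => ⟨⟨c, n⟩, h⟩⟩

lemma Int.pow_modEq_pow_mod (x : ℤ) (M a : ℕ) : x ^ a ≡ x ^ (a % M) [ZMOD x ^ M - 1] := by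
  have h : x ^ M ≡ 1 [ZMOD x ^ M - 1] := (Int.modEq_iff_dvd.mpr dvd_rfl).symm
  calc x ^ a = (x ^ M) ^ (a / M) * x ^ (a % M) := by rw [← pow_mul, ← pow_add, Nat.div_add_mod]
    _ ≡ 1 ^ (a / M) * x ^ (a % M) [ZMOD x ^ M - 1] := (h.pow _).mul_right _
    _ = x ^ (a % M) := by rw [one_pow, one_mul]

lemma Int.exists_lt_dvd_mul_pow_sub_of_dvd {x r s : ℤ} {M A B : ℕ} (hM : 0 < M)
    (h : x ^ M - 1 ∣ r * x ^ A - s * x ^ B) : ∃ k < M, x ^ M - 1 ∣ r * x ^ k - s := by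
  refine ⟨(A + (M - 1) * B) % M, Nat.mod_lt _ hM, ?_⟩
  have hB : B + (M - 1) * B = M * B := by
    rw [add_comm, ← Nat.succ_mul, Nat.succ_eq_add_one, Nat.sub_add_cancel hM]
  have h1 : x ^ (M * B) ≡ 1 [ZMOD x ^ M - 1] := by
    simpa using Int.pow_modEq_pow_mod x M (M * B)
  have h2 : s * x ^ B ≡ r * x ^ A [ZMOD x ^ M - 1] := Int.modEq_iff_dvd.mpr h
  refine Int.ModEq.dvd ?_
  calc s = s * 1 := (mul_one s).symm
    _ ≡ s * x ^ (M * B) [ZMOD x ^ M - 1] := h1.symm.mul_left s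
    _ = s * x ^ B * x ^ ((M - 1) * B) := by rw [← hB, pow_add, mul_assoc]
    _ ≡ r * x ^ A * x ^ ((M - 1) * B) [ZMOD x ^ M - 1] := h2.mul_right _
    _ = r * x ^ (A + (M - 1) * B) := by rw [pow_add, mul_assoc]
    _ ≡ r * x ^ ((A + (M - 1) * B) % M) [ZMOD x ^ M - 1] :=
        (Int.pow_modEq_pow_mod x M _).mul_left r

lemma conjH_intCast_iff (r s : ℤ) (M : ℕ) :
    conjH ⟨r, M⟩ ⟨s, M⟩ ↔ ∃ A B : ℕ, (2 ^ M - 1 : ℤ) ∣ r * 2 ^ A - s * 2 ^ B := by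
  rw [conjH_mk_iff]
  constructor
  · rintro ⟨n, c, h⟩
    obtain ⟨a, j, hc⟩ := DyadicQ.exists_eq_intCast_div_two_pow c
    have hq : (2 : ℚ) ^ n * r + (1 - 2 ^ M) * (a / 2 ^ j) = s := by
      simpa [coe_pow2, hc] using congrArg (fun x : DyadicQ => (x : ℚ)) h
    rw [← Int.toNat_sub_toNat_neg n, zpow_sub₀ two_ne_zero] at hq
    refine ⟨n.toNat + j, (-n).toNat + j, a * 2 ^ (-n).toNat, ?_⟩
    push_cast [zpow_natCast] at hq
    field_simp at hq
    qify
    linear_combination hq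
  · rintro ⟨A, B, d, hd⟩
    refine ⟨A - B, d * pow2 (-B), Subtype.ext ?_⟩
    have hq : (r * 2 ^ A - s * 2 ^ B : ℚ) = (2 ^ M - 1) * d := by exact_mod_cast hd
    push_cast [coe_pow2]
    simp only [zpow_sub₀ (two_ne_zero (α := ℚ)), zpow_neg, zpow_natCast]
    field_simp
    linear_combination hq

theorem stmt3 (r s m : ℤ) (hm : 1 ≤ m) :
    conjH ⟨(r : DyadicQ), m⟩ ⟨(s : DyadicQ), m⟩ ↔
      ∃ k : ℕ, (k : ℤ) < m ∧ (2 ^ m.toNat - 1 : ℤ) ∣ r * 2 ^ k - s := by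
  lift m to ℕ using by omega
  rw [conjH_intCast_iff, Int.toNat_natCast]
  constructor
  · rintro ⟨A, B, h⟩
    obtain ⟨k, hk, hdvd⟩ := Int.exists_lt_dvd_mul_pow_sub_of_dvd (by omega) h
    exact ⟨k, by exact_mod_cast hk, hdvd⟩
  · rintro ⟨k, -, hdvd⟩
    exact ⟨k, 0, by simpa using hdvd⟩
end

section
/- Let r, m ∈ ℤ with m ≠ 0 and suppose that (r,m) is not conjugate to (0,m) in H. Then for every element (s,q) ∈ H one has (r,m) ∼_{G(1,2)} (s,q) if and only if (r,m) ∼_H (s,q). -/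
/-!
Let `x` be an element of a group `G` none of whose conjugates lies in an associated subgroup
of an HNN extension `G*`. If `z * x * z⁻¹ ∈ G` for some `z ∈ G*` with reduced form
`g₀ t^u₁ g₁ ⋯ t^uₙ gₙ`, `n ≥ 1`, then the word
`g₀ t^u₁ g₁ ⋯ t^uₙ (gₙ x gₙ⁻¹) t^-uₙ gₙ₋₁⁻¹ ⋯ t^-u₁ g₀⁻¹` is again reduced: the only new
place where a pinch could occur is around `gₙ x gₙ⁻¹`, which is excluded by the hypothesis on `x`.
Britton's lemma then forbids this word from representing an element of `G`, so `z ∈ G` and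
conjugacy of `x` in `G*` comes from conjugacy in `G`. For `H = BS(1,2)` inside `G(1,2)`, the
conjugates of `(r,m)` all have second coordinate `m ≠ 0`, so none lies in `⟨a⟩`, and one lying
in `⟨t⟩` would be `(0,m)`.
-/

namespace HNNExtension

variable {G : Type*} [Group G] {A B : Subgroup G}

/-- Spells `(t^u g ∏ L) x (t^u g ∏ L)⁻¹ k` with letters `(u, g) ↦ t^u g` (see
`listProd_conjWord`); in the inverted half each group element moves one letter to the right. -/
def conjWord (u : ℤˣ) (g : G) : List (ℤˣ × G) → G → G → List (ℤˣ × G)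
  | [], x, k => [(u, g * x * g⁻¹), (-u, k)]
  | p :: L, x, k => (u, g) :: (conjWord p.1 p.2 L x g⁻¹ ++ [(-u, k)])

variable (φ : A ≃* B)

def listProd (l : List (ℤˣ × G)) : HNNExtension G A B φ :=
  (l.map fun p => t ^ (p.1 : ℤ) * of p.2).prod

variable {φ}

lemma exists_conjWord_eq_cons (u : ℤˣ) (g : G) (L : List (ℤˣ × G)) (x k : G) :
    ∃ c l, conjWord u g L x k = (u, c) :: l := by
  cases L <;> exact ⟨_, _, rfl⟩

lemma conjWord_ne_nil (u : ℤˣ) (g : G) (L : List (ℤˣ × G)) (x k : G) :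
    conjWord u g L x k ≠ [] := by
  obtain ⟨c, l, h⟩ := exists_conjWord_eq_cons u g L x k
  simp [h]

lemma getLast?_conjWord (u : ℤˣ) (g : G) (L : List (ℤˣ × G)) (x k : G) :
    (conjWord u g L x k).getLast? = some (-u, k) := by
  cases L with
  | nil => rfl
  | cons p L => rw [conjWord, ← List.cons_append, List.getLast?_concat]

lemma listProd_conjWord (u : ℤˣ) (g : G) (L : List (ℤˣ × G)) (x k : G) :
    listProd φ (conjWord u g L x k)
      = listProd φ ((u, g) :: L) * of x * (listProd φ ((u, g) :: L))⁻¹ * of k := by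
  induction L generalizing u g k with
  | nil =>
    simp only [conjWord, listProd, List.map_cons, List.map_nil, List.prod_cons, List.prod_nil,
      map_mul, map_inv, Units.val_neg]
    group
  | cons p L ih =>
    have hp := ih p.1 p.2 g⁻¹
    simp only [listProd, List.map_cons, List.prod_cons] at hp ⊢
    simp only [conjWord, List.map_cons, List.map_append, List.prod_cons, List.prod_append,
      List.map_nil, List.prod_nil, hp, map_inv, mul_inv_rev, Units.val_neg]
    group

/-- Reducedness at a letter of the inverted half of `conjWord`. -/
lemma neg_eq_neg_of_inv_mem_toSubgroup {u v : ℤˣ} {g : G}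
    (hg : g ∈ toSubgroup A B u → u = v) (hinv : g⁻¹ ∈ toSubgroup A B (-v)) : -v = -u := by
  by_contra hne
  have huv : -v = u := by simpa using Int.units_ne_iff_eq_neg.mp hne
  rw [huv, inv_mem_iff] at hinv
  exact neg_units_ne_self v (huv.trans (hg hinv))

lemma isChain_conjWord {x : G} (hx : ∀ (h : G) (v : ℤˣ), h * x * h⁻¹ ∉ toSubgroup A B v)
    (L : List (ℤˣ × G)) (u : ℤˣ) (g k : G)
    (hL : ((u, g) :: L).IsChain fun a b => a.2 ∈ toSubgroup A B a.1 → a.1 = b.1) :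
    (conjWord u g L x k).IsChain fun a b => a.2 ∈ toSubgroup A B a.1 → a.1 = b.1 := by
  induction L generalizing u g k with
  | nil => simpa [conjWord] using hx g u
  | cons p L ih =>
    obtain ⟨hgp, hpL⟩ := List.isChain_cons_cons.mp hL
    obtain ⟨c, l, hcl⟩ := exists_conjWord_eq_cons p.1 p.2 L x g⁻¹
    rw [conjWord, List.isChain_cons, List.isChain_append, getLast?_conjWord]
    refine ⟨?_, ih p.1 p.2 g⁻¹ hpL, List.isChain_singleton _, ?_⟩
    · simpa [hcl] using hgp
    · simpa using neg_eq_neg_of_inv_mem_toSubgroup hgp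

lemma NormalWord.ReducedWord.prod_eq_of_head_mul_listProd (w : NormalWord.ReducedWord G A B) :
    w.prod φ = of w.head * listProd φ w.toList :=
  rfl

theorem mem_range_of_conj_mem_range {x : G}
    (hx : ∀ (h : G) (v : ℤˣ), h * x * h⁻¹ ∉ toSubgroup A B v) {z : HNNExtension G A B φ}
    (hz : z * of x * z⁻¹ ∈ (of : G →* HNNExtension G A B φ).range) :
    z ∈ (of : G →* HNNExtension G A B φ).range := by
  obtain ⟨d⟩ := NormalWord.TransversalPair.nonempty G A B
  set w : NormalWord d := z • NormalWord.empty
  have hw : of w.head * listProd φ w.toList = z := by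
    rw [← NormalWord.ReducedWord.prod_eq_of_head_mul_listProd]
    exact (NormalWord.prod_smul φ z _).trans (by simp)
  rcases hL : w.toList with _ | ⟨⟨u, g⟩, L⟩
  · exact ⟨w.head, by simpa [hL, listProd] using hw⟩
  · let V : NormalWord.ReducedWord G A B :=
      ⟨w.head, conjWord u g L x w.head⁻¹, isChain_conjWord hx L u g _ (hL ▸ w.chain)⟩
    have hV : V.prod φ = z * of x * z⁻¹ := by
      rw [NormalWord.ReducedWord.prod_eq_of_head_mul_listProd, listProd_conjWord, ← hw, hL]
      simp only [V, map_inv, mul_inv_rev]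
      group
    exact absurd (ReducedWord.toList_eq_nil_of_mem_of_range φ V (hV ▸ hz))
      (conjWord_ne_nil u g L x _)

theorem isConj_of_iff {x y : G} (hA : ∀ h : G, h * x * h⁻¹ ∉ A) (hB : ∀ h : G, h * x * h⁻¹ ∉ B) :
    IsConj (of x : HNNExtension G A B φ) (of y) ↔ IsConj x y := by
  refine ⟨fun hxy => ?_, of.map_isConj⟩
  have hx : ∀ (h : G) (v : ℤˣ), h * x * h⁻¹ ∉ toSubgroup A B v := fun h v => by
    rcases Int.units_eq_one_or v with rfl | rfl
    exacts [hA h, hB h]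
  obtain ⟨z, hz⟩ := isConj_iff.mp hxy
  obtain ⟨h, rfl⟩ := mem_range_of_conj_mem_range hx ⟨y, hz.symm⟩
  exact isConj_iff.mpr ⟨h, of_injective (φ := φ) (by simpa using hz)⟩

end HNNExtension

lemma Hgrp.m_conj (z x : Hgrp) : (z * x * z⁻¹).m = x.m := by
  simp only [Hgrp.mul_def, Hgrp.inv_def]
  omega

lemma Hgrp.conj_notMem_zpowers_aH {x : Hgrp} (hx : x.m ≠ 0) (z : Hgrp) :
    z * x * z⁻¹ ∉ Subgroup.zpowers aH := by
  rintro ⟨n, hn⟩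
  have hm := congrArg Hgrp.m hn
  simp only [aH_zpow, Hgrp.m_conj] at hm
  exact hx hm.symm

lemma Hgrp.conj_notMem_zpowers_tH {r : DyadicQ} {m : ℤ} (h : ¬ conjH ⟨r, m⟩ ⟨0, m⟩) (z : Hgrp) :
    z * ⟨r, m⟩ * z⁻¹ ∉ Subgroup.zpowers tH := by
  rintro ⟨n, hn⟩
  simp only [tH_zpow] at hn
  have hnm : n = m := by simpa only [Hgrp.m_conj] using congrArg Hgrp.m hn
  rw [hnm] at hn
  exact h ⟨z, hn.symm⟩

theorem stmt6 (r m : ℤ) (hm : m ≠ 0)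
    (h : ¬ conjH ⟨(r : DyadicQ), m⟩ ⟨0, m⟩) (s : DyadicQ) (q : ℤ) :
    conjBG (ι ⟨(r : DyadicQ), m⟩) (ι ⟨s, q⟩) ↔ conjH ⟨(r : DyadicQ), m⟩ ⟨s, q⟩ := by
  simp only [conjBG, conjH, ← isConj_iff]
  exact HNNExtension.isConj_of_iff (Hgrp.conj_notMem_zpowers_aH hm) (Hgrp.conj_notMem_zpowers_tH h)
end
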